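/- Let M be the star with countably many branches, with metric d₂([x,m],[y,n]) = |x − y| if m = n and x + y otherwise, and define g : M → ℝ by g([x,n]) = n · x (well-defined on the quotient). Then g is geodesically convex on (M, d₂): for every geodesic γ from p to q and every t ∈ [0,1], g(γ(t)) ≤ (1 − t) g(p) + t g(q). -/

import Mathlib

/-- Points of `[0,1] × ℕ≥1`: countably many copies of the unit interval. -/
abbrev StarPoint : Type := Set.Icc (0:ℝ) 1 × {n : ℕ // 1 ≤ n}

/-- The gluing relation: `(x,m) ∼ (y,n) ↔ (x = y = 0) ∨ (x = y ∧ m = n)`. -/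
def starSetoid : Setoid StarPoint where
  r a b := (a.1.1 = 0 ∧ b.1.1 = 0) ∨ (a.1.1 = b.1.1 ∧ a.2 = b.2)
  iseqv := by
    constructor
    · intro a; exact Or.inr ⟨rfl, rfl⟩
    · rintro a b (⟨h1, h2⟩ | ⟨h1, h2⟩)
      · exact Or.inl ⟨h2, h1⟩
      · exact Or.inr ⟨h1.symm, h2.symm⟩
    · rintro a b c (⟨h1, h2⟩ | ⟨h1, h2⟩) (⟨g1, g2⟩ | ⟨g1, g2⟩)
      · exact Or.inl ⟨h1, g2⟩
      · exact Or.inl ⟨h1, g1 ▸ h2⟩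
      · exact Or.inl ⟨h1.trans g1, g2⟩
      · exact Or.inr ⟨h1.trans g1, h2.trans g2⟩

/-- The star with countably many branches: the quotient of `[0,1] × ℕ≥1` gluing all the
origins together. -/
def StarSpace : Type := Quotient starSetoid

/-- The distance `d₂((x,m),(y,n)) = |x-y|` if `m = n`, and `x + y` otherwise. -/
noncomputable def d2 (a b : StarPoint) : ℝ :=
  if a.2 = b.2 then |a.1.1 - b.1.1| else a.1.1 + b.1.1

lemma d2_self (a : StarPoint) : d2 a a = 0 := by
  unfold d2; rw [if_pos rfl, sub_self, abs_zero]

lemma d2_comm (a b : StarPoint) : d2 a b = d2 b a := by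
  unfold d2
  rcases eq_or_ne a.2 b.2 with h | h
  · rw [if_pos h, if_pos h.symm, abs_sub_comm]
  · rw [if_neg h, if_neg (Ne.symm h), add_comm]

lemma d2_triangle (a b c : StarPoint) : d2 a c ≤ d2 a b + d2 b c := by
  obtain ⟨⟨x, hx0, hx1⟩, m⟩ := a
  obtain ⟨⟨y, hy0, hy1⟩, n⟩ := b
  obtain ⟨⟨z, hz0, hz1⟩, k⟩ := c
  unfold d2
  dsimp only
  rcases eq_or_ne m n with hmn | hmn <;> rcases eq_or_ne n k with hnk | hnk
  · subst hmn; subst hnk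
    rw [if_pos rfl, if_pos rfl, if_pos rfl]
    exact abs_sub_le x y z
  · subst hmn
    rw [if_neg hnk, if_pos rfl, if_neg hnk]
    have := le_abs_self (x - y); linarith
  · subst hnk
    rw [if_neg hmn, if_neg hmn, if_pos rfl]
    have := le_abs_self (z - y); rw [abs_sub_comm] at this; linarith
  · rcases eq_or_ne m k with hmk | hmk
    · subst hmk
      rw [if_pos rfl, if_neg hmn, if_neg hnk]
      have h0 : |x - z| ≤ x + z := by
        rw [abs_sub_le_iff]; constructor <;> linarith
      linarith
    · rw [if_neg hmk, if_neg hmn, if_neg hnk]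
      linarith

lemma d2_rel_of_eq_zero {a b : StarPoint} (h : d2 a b = 0) : starSetoid.r a b := by
  unfold d2 at h
  split_ifs at h with hab
  · have : a.1.1 - b.1.1 = 0 := abs_eq_zero.mp h
    exact Or.inr ⟨by linarith, hab⟩
  · have h1 : 0 ≤ a.1.1 := a.1.2.1
    have h2 : 0 ≤ b.1.1 := b.1.2.1
    exact Or.inl ⟨by linarith, by linarith⟩

lemma d2_of_fst_eq_zero {a : StarPoint} (b : StarPoint) (ha : a.1.1 = 0) :
    d2 a b = b.1.1 := by
  unfold d2
  split_ifs with h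
  · rw [ha, zero_sub, abs_neg, abs_of_nonneg b.1.2.1]
  · rw [ha, zero_add]

lemma d2_congr_left {a₁ a₂ : StarPoint} (b : StarPoint) (h : starSetoid.r a₁ a₂) :
    d2 a₁ b = d2 a₂ b := by
  rcases h with ⟨h1, h2⟩ | ⟨h1, h2⟩
  · rw [d2_of_fst_eq_zero b h1, d2_of_fst_eq_zero b h2]
  · have : a₁ = a₂ := Prod.ext (Subtype.ext h1) h2
    rw [this]

/-- `d₂` descends to the quotient. -/
noncomputable def starDist2 : StarSpace → StarSpace → ℝ :=
  Quotient.lift₂ d2 (fun a₁ b₁ a₂ b₂ ha hb => by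
    calc d2 a₁ b₁ = d2 a₂ b₁ := d2_congr_left b₁ ha
    _ = d2 b₁ a₂ := d2_comm _ _
    _ = d2 b₂ a₂ := d2_congr_left a₂ hb
    _ = d2 a₂ b₂ := d2_comm _ _)

/-- The star with countably many branches, as a metric space for `d₂`. -/
noncomputable instance StarSpace.metricSpace : MetricSpace StarSpace where
  dist := starDist2
  dist_self := by
    rintro ⟨a⟩; exact d2_self a
  dist_comm := by
    rintro ⟨a⟩ ⟨b⟩; exact d2_comm a b
  dist_triangle := by
    rintro ⟨a⟩ ⟨b⟩ ⟨c⟩; exact d2_triangle a b c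
  eq_of_dist_eq_zero := by
    rintro ⟨a⟩ ⟨b⟩ h
    exact Quotient.sound (d2_rel_of_eq_zero h)

/-- The class of a point of `[0,1] × ℕ≥1` in the star. -/
def StarSpace.mk (a : StarPoint) : StarSpace := Quotient.mk starSetoid a

lemma StarSpace.dist_mk (a b : StarPoint) :
    dist (StarSpace.mk a) (StarSpace.mk b) = d2 a b := rfl

/-- The origin of the star: the common class of the points `(0, n)`. -/
def StarSpace.origin : StarSpace := StarSpace.mk (⟨0, by norm_num⟩, ⟨1, le_refl 1⟩)

/-- A geodesic from `p` to `q` in a metric space, parametrized by `[0,1]`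
(proportionally to arclength). -/
def IsGeodesic {X : Type*} [MetricSpace X] (p q : X) (γ : Set.Icc (0:ℝ) 1 → X) : Prop :=
  γ ⟨0, by norm_num⟩ = p ∧ γ ⟨1, by norm_num⟩ = q ∧
    ∀ s t : Set.Icc (0:ℝ) 1, dist (γ s) (γ t) = |(s:ℝ) - (t:ℝ)| * dist p q

/-- Geodesic convexity for a real-valued function on a metric space. -/
def GeodesicallyConvexReal {X : Type*} [MetricSpace X] (f : X → ℝ) : Prop :=
  ∀ (p q : X) (γ : Set.Icc (0:ℝ) 1 → X), IsGeodesic p q γ →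
    ∀ t : Set.Icc (0:ℝ) 1, f (γ t) ≤ (1 - (t:ℝ)) * f p + (t:ℝ) * f q

/-- The function `g [x, n] = n · x`, well-defined on the quotient. -/
def starG : StarSpace → ℝ :=
  Quotient.lift (fun a : StarPoint => (a.2.1 : ℝ) * a.1.1) (by
    rintro a b (⟨h1, h2⟩ | ⟨h1, h2⟩) <;> try dsimp only
    · rw [h1, h2, mul_zero, mul_zero]
    · rw [h1, h2])

/-! Write `hₖ [x, n]` for `x` on branch `n = k` and `0` elsewhere. Then `g = max_k k · hₖ`
with the maximum attained, and an attained pointwise maximum of geodesically convex functions is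
geodesically convex. For `hₖ`: if the point `z` at time `t` of a geodesic from `p` to `q` lies
on branch `k`, either `p` and `q` lie on it too and `z` is their affine interpolation (`ℝ` is
strictly convex), or the geodesic passes through the origin and the distance equations bound the
height of `z` by `(1 - t) hₖ p + t hₖ q`. -/

section Geodesic

variable {X : Type*} [MetricSpace X] {p q : X} {γ : Set.Icc (0:ℝ) 1 → X}

lemma IsGeodesic.dist_source (hγ : IsGeodesic p q γ) (t : Set.Icc (0:ℝ) 1) :
    dist (γ t) p = t * dist p q := by
  have h := hγ.2.2 t ⟨0, by norm_num⟩
  rwa [hγ.1, Subtype.coe_mk, sub_zero, abs_of_nonneg t.2.1] at h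

lemma IsGeodesic.dist_target (hγ : IsGeodesic p q γ) (t : Set.Icc (0:ℝ) 1) :
    dist (γ t) q = (1 - t) * dist p q := by
  have h := hγ.2.2 t ⟨1, by norm_num⟩
  rwa [hγ.2.1, Subtype.coe_mk, abs_sub_comm, abs_of_nonneg (sub_nonneg.2 t.2.2)] at h

lemma GeodesicallyConvexReal.const_mul {f : X → ℝ} (hf : GeodesicallyConvexReal f) {c : ℝ}
    (hc : 0 ≤ c) : GeodesicallyConvexReal (fun x => c * f x) := by
  intro p q γ hγ t
  calc c * f (γ t) ≤ c * ((1 - t) * f p + t * f q) := mul_le_mul_of_nonneg_left (hf p q γ hγ t) hc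
    _ = (1 - t) * (c * f p) + t * (c * f q) := by ring

lemma GeodesicallyConvexReal.of_forall_le_of_exists_eq {ι : Type*} {f : X → ℝ} {F : ι → X → ℝ}
    (hF : ∀ i, GeodesicallyConvexReal (F i)) (hle : ∀ i x, F i x ≤ f x)
    (hmax : ∀ x, ∃ i, f x = F i x) : GeodesicallyConvexReal f := by
  intro p q γ hγ t
  obtain ⟨i, hi⟩ := hmax (γ t)
  calc f (γ t) = F i (γ t) := hi
    _ ≤ (1 - t) * F i p + t * F i q := hF i p q γ hγ t
    _ ≤ (1 - t) * f p + t * f q := by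
      gcongr
      · exact sub_nonneg.2 t.2.2
      · exact hle i p
      · exact t.2.1
      · exact hle i q

end Geodesic

lemma d2_of_snd_eq {a b : StarPoint} (h : a.2 = b.2) : d2 a b = |(a.1 : ℝ) - b.1| := if_pos h

lemma d2_of_snd_ne {a b : StarPoint} (h : a.2 ≠ b.2) : d2 a b = a.1 + b.1 := if_neg h

lemma d2_le_add (a b : StarPoint) : d2 a b ≤ a.1 + b.1 := by
  unfold d2
  split_ifs
  · exact abs_sub_le_iff.2 ⟨by linarith [b.1.2.1], by linarith [a.1.2.1]⟩
  · exact le_rfl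

lemma fst_le_of_d2_eq_mul {z a b : StarPoint} {t : ℝ} (ht0 : 0 ≤ t) (ht1 : t ≤ 1)
    (hza : d2 z a = t * d2 a b) (hzb : d2 z b = (1 - t) * d2 a b) :
    (z.1 : ℝ) ≤ (1 - t) * (if a.2 = z.2 then (a.1 : ℝ) else 0) +
      t * (if b.2 = z.2 then (b.1 : ℝ) else 0) := by
  have ha0 := a.1.2.1
  have hb0 := b.1.2.1
  by_cases ha : a.2 = z.2 <;> by_cases hb : b.2 = z.2
  · rw [if_pos ha, if_pos hb]
    rw [d2_of_snd_eq ha.symm, d2_of_snd_eq (ha.trans hb.symm), abs_sub_comm] at hza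
    rw [d2_of_snd_eq hb.symm, d2_of_snd_eq (ha.trans hb.symm)] at hzb
    have hline := eq_lineMap_of_dist_eq_mul_of_dist_eq_mul (x := (a.1 : ℝ)) (y := z.1) (z := b.1)
      (r := t) hza hzb
    rw [hline, AffineMap.lineMap_apply_ring]
  · rw [if_pos ha, if_neg hb]
    rw [d2_of_snd_ne (ha.trans_ne (Ne.symm hb)), d2_of_snd_ne (Ne.symm hb)] at hzb
    linarith [mul_nonneg ht0 hb0]
  · rw [if_neg ha, if_pos hb]
    rw [d2_of_snd_ne (Ne.symm ha), d2_of_snd_ne (fun h => ha (h.trans hb))] at hza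
    linarith [mul_nonneg (sub_nonneg.2 ht1) ha0]
  · rw [if_neg ha, if_neg hb]
    rw [d2_of_snd_ne (Ne.symm ha)] at hza
    rw [d2_of_snd_ne (Ne.symm hb)] at hzb
    linarith [d2_le_add a b]

namespace StarSpace

lemma exists_mk (w : StarSpace) : ∃ a, mk a = w := Quotient.exists_rep w

def branchHeight (k : {n : ℕ // 1 ≤ n}) : StarSpace → ℝ :=
  Quotient.lift (fun a : StarPoint => if a.2 = k then (a.1 : ℝ) else 0) (by
    rintro a b (⟨ha, hb⟩ | ⟨ha, hb⟩) <;> simp only [ha, hb, ite_self])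

lemma branchHeight_mk (k : {n : ℕ // 1 ≤ n}) (a : StarPoint) :
    branchHeight k (mk a) = if a.2 = k then (a.1 : ℝ) else 0 := rfl

lemma branchHeight_nonneg (k : {n : ℕ // 1 ≤ n}) (w : StarSpace) : 0 ≤ branchHeight k w := by
  obtain ⟨a, rfl⟩ := exists_mk w
  rw [branchHeight_mk]
  split_ifs
  exacts [a.1.2.1, le_rfl]

lemma starG_mk (a : StarPoint) : starG (mk a) = (a.2.1 : ℝ) * a.1 := rfl

lemma mul_branchHeight_le_starG (k : {n : ℕ // 1 ≤ n}) (w : StarSpace) :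
    (k.1 : ℝ) * branchHeight k w ≤ starG w := by
  obtain ⟨a, rfl⟩ := exists_mk w
  rw [branchHeight_mk, starG_mk]
  split_ifs with h
  · rw [h]
  · rw [mul_zero]
    exact mul_nonneg (Nat.cast_nonneg _) a.1.2.1

lemma exists_starG_eq_mul_branchHeight (w : StarSpace) :
    ∃ k : {n : ℕ // 1 ≤ n}, starG w = k.1 * branchHeight k w := by
  obtain ⟨a, rfl⟩ := exists_mk w
  exact ⟨a.2, by rw [branchHeight_mk, if_pos rfl, starG_mk]⟩

theorem geodesicallyConvexReal_branchHeight (k : {n : ℕ // 1 ≤ n}) :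
    GeodesicallyConvexReal (branchHeight k) := by
  intro p q γ hγ t
  have hzp := hγ.dist_source t
  have hzq := hγ.dist_target t
  generalize γ t = w at hzp hzq ⊢
  obtain ⟨z, rfl⟩ := exists_mk w
  obtain ⟨a, rfl⟩ := exists_mk p
  obtain ⟨b, rfl⟩ := exists_mk q
  rw [dist_mk, dist_mk] at hzp hzq
  by_cases hz : z.2 = k
  · subst hz
    simp only [branchHeight_mk]
    exact fst_le_of_d2_eq_mul t.2.1 t.2.2 hzp hzq
  · rw [branchHeight_mk, if_neg hz]
    exact add_nonneg (mul_nonneg (sub_nonneg.2 t.2.2) (branchHeight_nonneg k _))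
      (mul_nonneg t.2.1 (branchHeight_nonneg k _))

end StarSpace

/-- The function `g [x,n] = n · x` is geodesically convex on the star
with countably many branches equipped with the metric `d₂`. -/
theorem starG_geodesicallyConvex_d2 : GeodesicallyConvexReal starG :=
  .of_forall_le_of_exists_eq
    (fun k => (StarSpace.geodesicallyConvexReal_branchHeight k).const_mul (Nat.cast_nonneg k.1))
    StarSpace.mul_branchHeight_le_starG StarSpace.exists_starG_eq_mul_branchHeight
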